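/- arXiv:1006.0784 — 3 statements merged into one kernel-verified Lean document; each statement's English description precedes it below -/
import Mathlib

section
/- A feasible point x̄ is an efficient (Pareto optimal) solution of the multiobjective problem of minimizing (F¹(x),...,F^p(x)) over a feasible set X if and only if for every index k, x̄ minimizes F^k(x) over the set of x ∈ X satisfying F^i(x) ≤ F^i(x̄) for all i ≠ k. -/
theorem chankong_haimes {α : Type*} {p : ℕ} (X : Set α) (F : Fin p → α → ℝ)
    (xbar : α) (hxbar : xbar ∈ X) :
    (¬ ∃ x ∈ X, (∀ i, F i x ≤ F i xbar) ∧ ∃ j, F j x < F j xbar) ↔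
      (∀ k : Fin p, ∀ x ∈ X, (∀ i, i ≠ k → F i x ≤ F i xbar) → F k xbar ≤ F k x) := by
  constructor
  · intro h k x hx hle
    by_contra hlt
    push_neg at hlt
    exact h ⟨x, hx, fun i => by
      by_cases hik : i = k
      · exact hik ▸ hlt.le
      · exact hle i hik, ⟨k, hlt⟩⟩
  · rintro h ⟨x, hx, hall, j, hj⟩
    exact absurd (h j x hx fun i _ => hall i) (not_le.mpr hj)
end

section
/- (Weak duality, static mixed case) Let x be feasible for (VP)₁: g(x) ≤ 0, and let (u, y, z¹,...,z^p, λ) be feasible for (Mix D)₁: Σᵢ λⁱ(∇fⁱ(u) + Bⁱzⁱ + Σⱼ yʲ∇gʲ(u)) = 0, zⁱᵀBⁱzⁱ ≤ 1, Σ_{j∈J_α} yʲ gʲ(u) ≥ 0 for each α = 1,...,r, y ≥ 0, λ > 0, Σλⁱ = 1. Suppose x ↦ Σᵢ λⁱ(fⁱ(x) + xᵀBⁱzⁱ + Σ_{j∈J₀} yʲ gʲ(x)) is pseudoinvex and each x ↦ Σ_{j∈J_α} yʲ gʲ(x) (α ≥ 1) is quasi-invex, all with respect to the same η. Then it cannot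 hold that fⁱ(x) + (xᵀBⁱx)^{1/2} ≤ fⁱ(u) + uᵀBⁱzⁱ + Σ_{j∈J₀} yʲ gʲ(u) for all i with strict inequality for some k. -/
open Matrix

/-- The gradient of `F` at `u`, as a vector in `ℝⁿ`. -/
noncomputable def grad {n : ℕ} (F : (Fin n → ℝ) → ℝ) (u : Fin n → ℝ) : Fin n → ℝ :=
  fun j => fderiv ℝ F u (Pi.single j 1)

/-- `F` is pseudoinvex with respect to `η`. -/
def Pseudoinvex {n : ℕ} (F : (Fin n → ℝ) → ℝ)
    (η : (Fin n → ℝ) → (Fin n → ℝ) → Fin n → ℝ) : Prop :=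
  ∀ x u, 0 ≤ η x u ⬝ᵥ grad F u → F u ≤ F x

/-- `G` is quasi-invex with respect to `η`. -/
def Quasiinvex {n : ℕ} (G : (Fin n → ℝ) → ℝ)
    (η : (Fin n → ℝ) → (Fin n → ℝ) → Fin n → ℝ) : Prop :=
  ∀ x u, G x ≤ G u → η x u ⬝ᵥ grad G u ≤ 0

lemma dot_grad {n : ℕ} (F : (Fin n → ℝ) → ℝ) (u d : Fin n → ℝ) :
    d ⬝ᵥ grad F u = fderiv ℝ F u d := by
  have h : d = ∑ j, d j • (Pi.single j 1 : Fin n → ℝ) := by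
    funext k
    simp [Finset.sum_apply, Pi.single_apply]
  conv_rhs => rw [h]
  rw [map_sum]
  simp [dotProduct, grad]

noncomputable def dotCLM {n : ℕ} (w : Fin n → ℝ) : (Fin n → ℝ) →L[ℝ] ℝ :=
  ∑ j, w j • (ContinuousLinearMap.proj j : ((Fin n → ℝ)) →L[ℝ] ℝ)

lemma dotCLM_apply {n : ℕ} (w v : Fin n → ℝ) : dotCLM w v = v ⬝ᵥ w := by
  simp [dotCLM, dotProduct, mul_comm]

lemma hasFDerivAt_dot {n : ℕ} (w u : Fin n → ℝ) :
    HasFDerivAt (fun v : Fin n → ℝ => v ⬝ᵥ w) (dotCLM w) u := by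
  have h : (fun v : Fin n → ℝ => v ⬝ᵥ w) = ⇑(dotCLM w) := by
    funext v; rw [dotCLM_apply]
  rw [h]
  exact (dotCLM w).hasFDerivAt

/-- Cauchy-Schwarz for PSD matrices. -/
lemma psd_cs {n : ℕ} {B : Matrix (Fin n) (Fin n) ℝ} (hB : B.PosSemidef)
    (x z : Fin n → ℝ) :
    x ⬝ᵥ B.mulVec z ≤ Real.sqrt (x ⬝ᵥ B.mulVec x) * Real.sqrt (z ⬝ᵥ B.mulVec z) := by
  obtain ⟨S, hS⟩ : ∃ S : Matrix (Fin n) (Fin n) ℝ, B = Sᵀ * S := by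
    open scoped MatrixOrder in
    obtain ⟨S, hS⟩ := CStarAlgebra.nonneg_iff_eq_star_mul_self.mp hB.nonneg
    exact ⟨S, by rw [hS, Matrix.star_eq_conjTranspose, Matrix.conjTranspose_eq_transpose_of_trivial]⟩
  have key : ∀ v w : Fin n → ℝ, v ⬝ᵥ B.mulVec w = (S.mulVec v) ⬝ᵥ (S.mulVec w) := by
    intro v w
    rw [hS, ← Matrix.mulVec_mulVec, dotProduct_mulVec, Matrix.vecMul_transpose]
  rw [key, key, key]
  set a := S.mulVec x
  set b := S.mulVec z
  have h1 : (a ⬝ᵥ b)^2 ≤ (a ⬝ᵥ a) * (b ⬝ᵥ b) := by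
    simpa [dotProduct, pow_two, mul_comm] using
      Finset.sum_mul_sq_le_sq_mul_sq Finset.univ a b
  calc a ⬝ᵥ b ≤ |a ⬝ᵥ b| := le_abs_self _
    _ = Real.sqrt ((a ⬝ᵥ b)^2) := (Real.sqrt_sq_eq_abs _).symm
    _ ≤ Real.sqrt ((a ⬝ᵥ a) * (b ⬝ᵥ b)) := Real.sqrt_le_sqrt h1
    _ = _ := Real.sqrt_mul (by
        exact Finset.sum_nonneg fun i _ => mul_self_nonneg (a i)) _

lemma dotProduct_sum' {n : ℕ} {ι : Type*} (d : Fin n → ℝ) (s : Finset ι)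
    (w : ι → Fin n → ℝ) : d ⬝ᵥ (∑ i ∈ s, w i) = ∑ i ∈ s, d ⬝ᵥ w i := by
  simp only [dotProduct, Finset.sum_apply, Finset.mul_sum]
  exact Finset.sum_comm

theorem mixed_weak_duality {n p m r : ℕ}
    (f : Fin p → (Fin n → ℝ) → ℝ) (g : Fin m → (Fin n → ℝ) → ℝ)
    (hfd : ∀ i, Differentiable ℝ (f i)) (hgd : ∀ j, Differentiable ℝ (g j))
    (B : Fin p → Matrix (Fin n) (Fin n) ℝ) (hB : ∀ i, (B i).PosSemidef)
    (J : Fin (r + 1) → Finset (Fin m))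
    (hJdisj : ∀ a b, a ≠ b → Disjoint (J a) (J b))
    (hJcover : ∀ j : Fin m, ∃ a, j ∈ J a)
    (η : (Fin n → ℝ) → (Fin n → ℝ) → Fin n → ℝ)
    (x u : Fin n → ℝ) (y : Fin m → ℝ) (z : Fin p → Fin n → ℝ) (lam : Fin p → ℝ)
    -- primal feasibility
    (hx : ∀ j, g j x ≤ 0)
    -- dual feasibility
    (hdual : (∑ i, lam i • (grad (f i) u + (B i).mulVec (z i) +
        ∑ j, y j • grad (g j) u)) = 0)
    (hz : ∀ i, z i ⬝ᵥ (B i).mulVec (z i) ≤ 1)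
    (hJineq : ∀ a : Fin (r + 1), a ≠ 0 → 0 ≤ ∑ j ∈ J a, y j * g j u)
    (hy : ∀ j, 0 ≤ y j) (hlam : ∀ i, 0 < lam i) (hlamsum : ∑ i, lam i = 1)
    -- generalized invexity hypotheses
    (hpseudo : Pseudoinvex
      (fun v => ∑ i, lam i * (f i v + v ⬝ᵥ (B i).mulVec (z i) + ∑ j ∈ J 0, y j * g j v)) η)
    (hquasi : ∀ a : Fin (r + 1), a ≠ 0 →
      Quasiinvex (fun v => ∑ j ∈ J a, y j * g j v) η) :
    ¬ ((∀ i, f i x + Real.sqrt (x ⬝ᵥ (B i).mulVec x) ≤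
          f i u + u ⬝ᵥ (B i).mulVec (z i) + ∑ j ∈ J 0, y j * g j u) ∧
       (∃ k, f k x + Real.sqrt (x ⬝ᵥ (B k).mulVec x) <
          f k u + u ⬝ᵥ (B k).mulVec (z k) + ∑ j ∈ J 0, y j * g j u)) := by
  rintro ⟨hall, k, hk⟩
  set d := η x u with hd
  set D : Fin m → ℝ := fun j => fderiv ℝ (g j) u d with hD
  -- derivative of each group constraint function
  have hGa : ∀ a : Fin (r + 1), HasFDerivAt (fun v => ∑ j ∈ J a, y j * g j v)
      (∑ j ∈ J a, y j • fderiv ℝ (g j) u) u := fun a =>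
    HasFDerivAt.fun_sum fun j _ => ((hgd j u).hasFDerivAt.const_mul (y j))
  -- quasi-invexity gives: each group derivative term is nonpositive
  have hS : ∀ a : Fin (r + 1), a ≠ 0 → ∑ j ∈ J a, y j * D j ≤ 0 := by
    intro a ha
    have hGx : (∑ j ∈ J a, y j * g j x) ≤ ∑ j ∈ J a, y j * g j u := by
      refine le_trans ?_ (hJineq a ha)
      exact Finset.sum_nonpos fun j _ => mul_nonpos_of_nonneg_of_nonpos (hy j) (hx j)
    have h := hquasi a ha x u hGx
    rw [dot_grad, (hGa a).fderiv] at h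
    simpa [hD] using h
  -- derivative of the Lagrangian-type objective
  have hΦ : HasFDerivAt
      (fun v => ∑ i, lam i * (f i v + v ⬝ᵥ (B i).mulVec (z i) + ∑ j ∈ J 0, y j * g j v))
      (∑ i, lam i • ((fderiv ℝ (f i) u) + dotCLM ((B i).mulVec (z i)) +
        ∑ j ∈ J 0, y j • fderiv ℝ (g j) u)) u := by
    refine HasFDerivAt.fun_sum fun i _ => ?_
    exact (((hfd i u).hasFDerivAt.add (hasFDerivAt_dot _ u)).add (hGa 0)).const_mul (lam i)
  -- dot the dual equation with d
  have hdd : ∑ i, lam i * ((fderiv ℝ (f i) u d) + d ⬝ᵥ (B i).mulVec (z i)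
      + ∑ j, y j * D j) = 0 := by
    have h0 : d ⬝ᵥ (∑ i, lam i • (grad (f i) u + (B i).mulVec (z i) +
        ∑ j, y j • grad (g j) u)) = 0 := by rw [hdual]; simp
    rw [dotProduct_sum'] at h0
    rw [← h0]
    refine Finset.sum_congr rfl fun i _ => ?_
    rw [dotProduct_smul, smul_eq_mul]
    congr 1
    rw [dotProduct_add, dotProduct_add, dot_grad, dotProduct_sum']
    congr 1
    refine Finset.sum_congr rfl fun j _ => ?_
    rw [dotProduct_smul, smul_eq_mul, dot_grad]
  -- split the full multiplier sum over the partition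
  have hsplit : ∑ j, y j * D j = (∑ j ∈ J 0, y j * D j)
      + ∑ b : Fin r, ∑ j ∈ J b.succ, y j * D j := by
    have huniv : (Finset.univ : Finset (Fin m))
        = (Finset.univ : Finset (Fin (r + 1))).biUnion J := by
      ext j
      simp only [Finset.mem_univ, Finset.mem_biUnion, true_iff, true_and]
      exact hJcover j
    rw [huniv, Finset.sum_biUnion (fun a _ b _ hab => hJdisj a b hab), Fin.sum_univ_succ]
  set Tr : ℝ := ∑ b : Fin r, ∑ j ∈ J b.succ, y j * D j with hTr
  have hTr_nonpos : Tr ≤ 0 :=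
    Finset.sum_nonpos fun b _ => hS b.succ (Fin.succ_ne_zero b)
  -- compute the directional derivative of the objective
  have hΦd : d ⬝ᵥ grad
      (fun v => ∑ i, lam i * (f i v + v ⬝ᵥ (B i).mulVec (z i) + ∑ j ∈ J 0, y j * g j v)) u
      = ∑ i, lam i * ((fderiv ℝ (f i) u d) + d ⬝ᵥ (B i).mulVec (z i)
          + ∑ j ∈ J 0, y j * D j) := by
    rw [dot_grad, hΦ.fderiv]
    simp only [ContinuousLinearMap.sum_apply, ContinuousLinearMap.smul_apply,
      ContinuousLinearMap.add_apply, dotCLM_apply, smul_eq_mul, hD]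
  have hkey : ∑ i, lam i * ((fderiv ℝ (f i) u d) + d ⬝ᵥ (B i).mulVec (z i)
      + ∑ j ∈ J 0, y j * D j) = -Tr := by
    have expand : ∑ i, lam i * ((fderiv ℝ (f i) u d) + d ⬝ᵥ (B i).mulVec (z i)
        + ∑ j, y j * D j)
        = (∑ i, lam i * ((fderiv ℝ (f i) u d) + d ⬝ᵥ (B i).mulVec (z i)
          + ∑ j ∈ J 0, y j * D j)) + (∑ i, lam i) * Tr := by
      rw [Finset.sum_mul, ← Finset.sum_add_distrib]
      refine Finset.sum_congr rfl fun i _ => ?_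
      rw [hsplit]
      ring
    rw [expand, hlamsum, one_mul] at hdd
    linarith
  -- pseudoinvexity
  have hΦle := hpseudo x u (by rw [← hd, hΦd, hkey]; linarith)
  simp only at hΦle
  -- now derive the contradiction with the assumed domination
  have hxle : ∀ i : Fin p, f i x + x ⬝ᵥ (B i).mulVec (z i) + ∑ j ∈ J 0, y j * g j x
      ≤ f i x + Real.sqrt (x ⬝ᵥ (B i).mulVec x) := by
    intro i
    have h1 : x ⬝ᵥ (B i).mulVec (z i) ≤ Real.sqrt (x ⬝ᵥ (B i).mulVec x) := by
      calc x ⬝ᵥ (B i).mulVec (z i)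
          ≤ Real.sqrt (x ⬝ᵥ (B i).mulVec x) * Real.sqrt (z i ⬝ᵥ (B i).mulVec (z i)) :=
            psd_cs (hB i) x (z i)
        _ ≤ Real.sqrt (x ⬝ᵥ (B i).mulVec x) * 1 := by
            refine mul_le_mul_of_nonneg_left ?_ (Real.sqrt_nonneg _)
            calc Real.sqrt (z i ⬝ᵥ (B i).mulVec (z i)) ≤ Real.sqrt 1 :=
                  Real.sqrt_le_sqrt (hz i)
              _ = 1 := Real.sqrt_one
        _ = Real.sqrt (x ⬝ᵥ (B i).mulVec x) := mul_one _
    have h2 : (∑ j ∈ J 0, y j * g j x) ≤ 0 :=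
      Finset.sum_nonpos fun j _ => mul_nonpos_of_nonneg_of_nonpos (hy j) (hx j)
    linarith
  have hltsum : ∑ i, lam i * (f i x + Real.sqrt (x ⬝ᵥ (B i).mulVec x))
      < ∑ i, lam i * (f i u + u ⬝ᵥ (B i).mulVec (z i) + ∑ j ∈ J 0, y j * g j u) := by
    refine Finset.sum_lt_sum (fun i _ => mul_le_mul_of_nonneg_left (hall i) (hlam i).le)
      ⟨k, Finset.mem_univ k, mul_lt_mul_of_pos_left hk (hlam k)⟩
  have hlesum : ∑ i, lam i * (f i x + x ⬝ᵥ (B i).mulVec (z i) + ∑ j ∈ J 0, y j * g j x)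
      ≤ ∑ i, lam i * (f i x + Real.sqrt (x ⬝ᵥ (B i).mulVec x)) :=
    Finset.sum_le_sum fun i _ => mul_le_mul_of_nonneg_left (hxle i) (hlam i).le
  linarith
end

section
/- Let B be symmetric positive semidefinite, δ ≥ 0, τ > 0, and suppose τ·Bx = 2δ·Bz with δ(zᵀBz − 1) = 0. Then xᵀBz = (xᵀBx)^{1/2}. -/
open Matrix

theorem converse_duality_sqrt_step {n : ℕ} (B : Matrix (Fin n) (Fin n) ℝ)
    (hB : B.PosSemidef) (x z : Fin n → ℝ) (δ τ : ℝ) (hδ : 0 ≤ δ) (hτ : 0 < τ)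
    (heq : τ • B.mulVec x = (2 * δ) • B.mulVec z)
    (hcs : δ * (z ⬝ᵥ B.mulVec z - 1) = 0) :
    x ⬝ᵥ B.mulVec z = Real.sqrt (x ⬝ᵥ B.mulVec x) := by
  have hsym : ∀ u v : Fin n → ℝ, u ⬝ᵥ B.mulVec v = v ⬝ᵥ B.mulVec u := by
    intro u v
    have hBt : Bᵀ = B := by simpa using hB.isHermitian.eq
    rw [Matrix.dotProduct_mulVec, ← Matrix.mulVec_transpose, hBt, dotProduct_comm]
  have hBx : B.mulVec x = (2 * δ / τ) • B.mulVec z := by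
    have := congrArg (fun w => τ⁻¹ • w) heq
    simpa [smul_smul, inv_mul_cancel₀ hτ.ne', div_eq_inv_mul, mul_comm, mul_assoc] using this
  rcases eq_or_lt_of_le hδ with h0 | hpos
  · -- δ = 0 : Bx = 0
    have hBx0 : B.mulVec x = 0 := by
      rw [hBx, ← h0]; simp
    rw [hsym x z, hBx0]
    simp
  · have hz1 : z ⬝ᵥ B.mulVec z = 1 := by
      have := mul_eq_zero.mp hcs
      rcases this with h | h
      · exact absurd h hpos.ne'
      · linarith
    have hc : (0:ℝ) ≤ 2 * δ / τ := by positivity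
    have h1 : x ⬝ᵥ B.mulVec z = 2 * δ / τ := by
      rw [hsym x z, hBx, dotProduct_smul, smul_eq_mul, hz1, mul_one]
    have h2 : x ⬝ᵥ B.mulVec x = (2 * δ / τ)^2 := by
      rw [hBx, dotProduct_smul, smul_eq_mul, h1]; ring
    rw [h1, h2, Real.sqrt_sq hc]
end
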